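/- arXiv:1805.03576 — 5 statements merged into one kernel-verified Lean document; each statement's English description precedes it below -/
import Mathlib

section
/- For every ε with 0 ≤ ε < 1, the function u(θ,φ) = cos θ satisfies Δ_FS u = -2·u at every point (θ,φ) with 0 < θ < π and φ ∈ ℝ; that is, cos θ is an eigenfunction of the Finslerian Laplace operator of the Finslerian sphere with eigenvalue -2, independent of ε. -/
open Real

/-- The Finslerian Laplace operator of the "Finslerian sphere" with parameter `ε`,
acting on a function `u : ℝ → ℝ → ℝ` of the angular variables `(θ, φ)`. -/
noncomputable def finslerLaplacian (ε : ℝ) (u : ℝ → ℝ → ℝ) (θ φ : ℝ) : ℝ :=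
  (2 * (1 - ε ^ 2 * sin θ ^ 2) ^ ((3 : ℝ) / 2) /
      (sin θ ^ 2 * (1 + Real.sqrt (1 - ε ^ 2 * sin θ ^ 2)))) *
    deriv (deriv (u θ)) φ
  + (2 * (1 - ε ^ 2 * sin θ ^ 2) / (1 + Real.sqrt (1 - ε ^ 2 * sin θ ^ 2))) *
    deriv (deriv (fun t => u t φ)) θ
  + (2 * cos θ * (ε ^ 2 * sin θ ^ 2 + Real.sqrt (1 - ε ^ 2 * sin θ ^ 2)) /
      (sin θ * (1 + Real.sqrt (1 - ε ^ 2 * sin θ ^ 2)))) *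
    deriv (fun t => u t φ) θ

theorem finslerLaplacian_of_const_phi (ε : ℝ) (f : ℝ → ℝ) (θ φ : ℝ) :
    finslerLaplacian ε (fun t _ => f t) θ φ =
      2 * (1 - ε ^ 2 * sin θ ^ 2) / (1 + √(1 - ε ^ 2 * sin θ ^ 2)) * deriv (deriv f) θ
      + 2 * cos θ * (ε ^ 2 * sin θ ^ 2 + √(1 - ε ^ 2 * sin θ ^ 2)) /
          (sin θ * (1 + √(1 - ε ^ 2 * sin θ ^ 2))) * deriv f θ := by
  simp [finslerLaplacian]

theorem deriv_deriv_cos (θ : ℝ) : deriv (deriv cos) θ = -cos θ := by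
  simp [Real.deriv_cos']

theorem finslerLaplacian_cos_eigen_general (ε : ℝ)
    (θ φ : ℝ) (hθ0 : 0 < θ) (hθπ : θ < Real.pi) :
    finslerLaplacian ε (fun θ' _ => Real.cos θ') θ φ = -2 * Real.cos θ := by
  have hsin : sin θ ≠ 0 := (sin_pos_of_pos_of_lt_pi hθ0 hθπ).ne'
  have hden : 1 + √(1 - ε ^ 2 * sin θ ^ 2) ≠ 0 := by positivity
  -- The two θ-coefficients add up to `2 (1 - s + s + √(1 - s)) / (1 + √(1 - s)) = 2`.
  rw [finslerLaplacian_of_const_phi, deriv_deriv_cos, Real.deriv_cos]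
  field_simp
  ring

/-- `cos θ` is an eigenfunction of the Finslerian Laplace operator with eigenvalue `-2`,
independently of `ε`. -/
theorem finslerLaplacian_cos_eigen (ε : ℝ) (hε0 : 0 ≤ ε) (hε1 : ε < 1)
    (θ φ : ℝ) (hθ0 : 0 < θ) (hθπ : θ < Real.pi) :
    finslerLaplacian ε (fun θ' _ => Real.cos θ') θ φ = -2 * Real.cos θ :=
  finslerLaplacian_cos_eigen_general ε θ φ hθ0 hθπ
end

section
/- For every ε with 0 ≤ ε < 1, the function u(θ,φ) = sin θ · sin φ satisfies Δ_FS u = (-2 + 2ε²)·u at every point (θ,φ) with 0 < θ < π and φ ∈ ℝ; that is, sin θ sin φ is an eigenfunction of the Finslerian Laplace operator of the Finslerian sphere with eigenvalue -2 + 2ε². -/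
open Real

/-!
Both second derivatives of `sin θ sin φ` equal `-sin θ sin φ` and its `θ`-derivative is
`cos θ sin φ`. With `r = √(1 - ε² sin² θ)`, so that `(1 - ε² sin² θ)^{3/2} = (1 - ε² sin² θ) r`
when `ε² sin² θ ≤ 1`, and `cos² θ = 1 - sin² θ`, the three terms of `Δ_FS` add up to
`2 (ε² - 1) sin² θ (1 + r) sin φ / (sin θ (1 + r))`, in which `1 + r` cancels.
-/

theorem rpow_three_halves_eq_mul_sqrt {x : ℝ} (hx : 0 ≤ x) : x ^ ((3 : ℝ) / 2) = x * √x := by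
  rw [show (3 : ℝ) / 2 = 1 + 1 / 2 by norm_num, rpow_add' hx (by norm_num), rpow_one,
    sqrt_eq_rpow]

theorem deriv_deriv_const_mul_sin (a x : ℝ) :
    deriv (deriv fun t => a * sin t) x = -(a * sin x) := by
  simp

theorem deriv_sin_mul_const (b x : ℝ) : deriv (fun t => sin t * b) x = cos x * b := by
  simp

theorem deriv_deriv_sin_mul_const (b x : ℝ) :
    deriv (deriv fun t => sin t * b) x = -(sin x * b) := by
  simp

theorem finslerLaplacian_coeff_identity {ε s c r q : ℝ} (hs : s ≠ 0) (hr : 1 + r ≠ 0)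
    (hc : c ^ 2 = 1 - s ^ 2) :
    2 * ((1 - ε ^ 2 * s ^ 2) * r) / (s ^ 2 * (1 + r)) * -(s * q)
      + 2 * (1 - ε ^ 2 * s ^ 2) / (1 + r) * -(s * q)
      + 2 * c * (ε ^ 2 * s ^ 2 + r) / (s * (1 + r)) * (c * q)
      = (-2 + 2 * ε ^ 2) * (s * q) := by
  field_simp
  rw [hc]
  ring

/-- `sin θ · sin φ` is an eigenfunction of the Finslerian Laplace operator with eigenvalue
`-2 + 2ε²`. -/
theorem finslerLaplacian_sin_sin_eigen (ε : ℝ) (hε0 : 0 ≤ ε) (hε1 : ε < 1)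
    (θ φ : ℝ) (hθ0 : 0 < θ) (hθπ : θ < Real.pi) :
    finslerLaplacian ε (fun θ' φ' => Real.sin θ' * Real.sin φ') θ φ =
      (-2 + 2 * ε ^ 2) * (Real.sin θ * Real.sin φ) := by
  have hsin : sin θ ≠ 0 := (sin_pos_of_pos_of_lt_pi hθ0 hθπ).ne'
  have hradicand : 0 ≤ 1 - ε ^ 2 * sin θ ^ 2 := by
    nlinarith [sin_sq_le_one θ, sq_nonneg (sin θ)]
  unfold finslerLaplacian
  rw [deriv_deriv_const_mul_sin, deriv_deriv_sin_mul_const, deriv_sin_mul_const,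
    rpow_three_halves_eq_mul_sqrt hradicand]
  exact finslerLaplacian_coeff_identity hsin (by positivity) (cos_sq' θ)
end

section
/- For every ε with 0 ≤ ε < 1, the Holmes–Thompson volume of the Finslerian sphere equals 4π/(1-ε²); explicitly, ∫₀^{2π} ∫₀^{π} sin θ · (1-ε²sin²θ)^{-3/2} dθ dφ = 4π/(1-ε²). -/
open Real MeasureTheory

/-! With `g θ = 1 - k sin² θ = (1 - k) + k cos² θ`, the function `-cos θ · g(θ)^{-1/2}` has
derivative `sin θ · g^{-3/2} · (g - k cos² θ) = (1 - k) sin θ · g^{-3/2}`, so by the fundamental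
theorem of calculus the inner integral equals `2 / (1 - k)`; the outer integral only contributes a
factor `2π`. -/

lemma one_sub_mul_sin_sq_pos {k : ℝ} (hk : k < 1) (θ : ℝ) : 0 < 1 - k * sin θ ^ 2 := by
  nlinarith [sin_sq_le_one θ, sq_nonneg (sin θ),
    mul_nonneg (sub_nonneg.2 hk.le) (sq_nonneg (sin θ))]

lemma hasDerivAt_neg_cos_mul_rpow {k : ℝ} (hk : k < 1) (θ : ℝ) :
    HasDerivAt (fun θ => -cos θ * (1 - k * sin θ ^ 2) ^ (-(1 : ℝ) / 2))
      ((1 - k) * (sin θ * (1 - k * sin θ ^ 2) ^ (-(3 : ℝ) / 2))) θ := by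
  have hg := one_sub_mul_sin_sq_pos hk θ
  have hg' : HasDerivAt (fun θ => 1 - k * sin θ ^ 2) (-(k * (2 * sin θ * cos θ))) θ := by
    simpa [mul_comm, mul_left_comm, mul_assoc] using
      (((hasDerivAt_sin θ).pow 2).const_mul k).const_sub 1
  refine ((hasDerivAt_cos θ).neg.mul
    (hg'.rpow_const (p := -(1 : ℝ) / 2) (Or.inl hg.ne'))).congr_deriv ?_
  have hpow : (1 - k * sin θ ^ 2) ^ (-(1 : ℝ) / 2) =
      (1 - k * sin θ ^ 2) * (1 - k * sin θ ^ 2) ^ (-(3 : ℝ) / 2) := by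
    rw [show -(1 : ℝ) / 2 = 1 + -(3 : ℝ) / 2 by norm_num, rpow_add hg, rpow_one]
  rw [Pi.neg_apply, show -(1 : ℝ) / 2 - 1 = -(3 : ℝ) / 2 by norm_num, hpow]
  linear_combination
    (-(k * sin θ * (1 - k * sin θ ^ 2) ^ (-(3 : ℝ) / 2))) * sin_sq_add_cos_sq θ

lemma integral_sin_mul_one_sub_mul_sin_sq_rpow {k : ℝ} (hk : k < 1) :
    ∫ θ in (0 : ℝ)..π, sin θ * (1 - k * sin θ ^ 2) ^ (-(3 : ℝ) / 2) = 2 / (1 - k) := by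
  have hcont : Continuous fun θ => sin θ * (1 - k * sin θ ^ 2) ^ (-(3 : ℝ) / 2) :=
    continuous_sin.mul <| (by fun_prop : Continuous fun θ => 1 - k * sin θ ^ 2).rpow_const
      fun θ => Or.inl (one_sub_mul_sin_sq_pos hk θ).ne'
  have hftc := intervalIntegral.integral_eq_sub_of_hasDerivAt
    (fun θ _ => hasDerivAt_neg_cos_mul_rpow hk θ)
    ((hcont.const_mul (1 - k)).intervalIntegrable 0 π)
  rw [intervalIntegral.integral_const_mul] at hftc
  rw [eq_div_iff (sub_pos.2 hk).ne', mul_comm, hftc]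
  norm_num

/-- The Holmes–Thompson volume of the "Finslerian sphere" equals `4π/(1-ε²)`:
`∫₀^{2π} ∫₀^{π} sin θ · (1-ε²sin²θ)^{-3/2} dθ dφ = 4π/(1-ε²)`. -/
theorem holmesThompson_volume_finslerSphere (ε : ℝ) (hε0 : 0 ≤ ε) (hε1 : ε < 1) :
    (∫ φ in (0 : ℝ)..(2 * Real.pi),
        ∫ θ in (0 : ℝ)..Real.pi,
          Real.sin θ * (1 - ε ^ 2 * Real.sin θ ^ 2) ^ (-(3 : ℝ) / 2)) =
      4 * Real.pi / (1 - ε ^ 2) := by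
  have hε : ε ^ 2 < 1 := by nlinarith
  rw [integral_sin_mul_one_sub_mul_sin_sq_rpow hε, intervalIntegral.integral_const, smul_eq_mul]
  field_simp
  ring
end

section
/- For every ε with 0 ≤ ε < 1, setting n₁ = (-1 + √(9-8ε²))/2, the function W(r,θ,φ) = r^{n₁} · sin θ · cos φ satisfies the Finslerian Laplace equation (1/r²)·∂/∂r(r²·∂W/∂r) + (1/r²)·Δ_FS W = 0 at every point with r > 0, 0 < θ < π, φ ∈ ℝ, where Δ_FS acts on the angular variables (θ,φ). -/
/-!
Separate variables. The radial operator `r⁻² ∂_r (r² ∂_r)` sends `r^p` to `p (p + 1) r^(p-2)`,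
and `sin θ cos φ` is an eigenfunction of the Finslerian Laplacian with eigenvalue `-2 (1 - ε²)`.
The exponent `n₁` is the positive root of `p (p + 1) = 2 (1 - ε²)`, so the two contributions cancel.
-/

open Real

theorem deriv_sq_mul_deriv_rpow_mul_const (p c : ℝ) {r : ℝ} (hr : 0 < r) :
    deriv (fun s : ℝ => s ^ 2 * deriv (fun s' : ℝ => s' ^ p * c) s) r
      = p * (p + 1) * r ^ p * c := by
  have h_near : (fun s : ℝ => s ^ 2 * deriv (fun s' : ℝ => s' ^ p * c) s)
      =ᶠ[nhds r] fun s => p * c * s ^ (p + 1) := by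
    filter_upwards [eventually_gt_nhds hr] with s hs
    rw [((hasDerivAt_rpow_const (p := p) (Or.inl hs.ne')).mul_const c).deriv,
      show p + 1 = 2 + (p - 1) by ring, rpow_add hs, rpow_two]
    ring
  rw [h_near.deriv_eq, ((hasDerivAt_rpow_const (p := p + 1) (Or.inl hr.ne')).const_mul _).deriv]
  simp only [add_sub_cancel_right]
  ring

theorem finslerLaplacian_const_mul_sin_mul_cos (ε c θ φ : ℝ) (hsin : sin θ ≠ 0)
    (hε : ε ^ 2 * sin θ ^ 2 ≤ 1) :
    finslerLaplacian ε (fun θ φ => c * sin θ * cos φ) θ φ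
      = -(2 * (1 - ε ^ 2)) * (c * sin θ * cos φ) := by
  have hφφ : deriv (deriv fun x => c * sin θ * cos x) φ = -(c * sin θ * cos φ) := by simp
  have hθ : deriv (fun t => c * sin t * cos φ) θ = c * cos θ * cos φ := by simp
  have hθθ : deriv (deriv fun t => c * sin t * cos φ) θ = -(c * sin θ * cos φ) := by simp
  have hS : 0 ≤ 1 - ε ^ 2 * sin θ ^ 2 := by linarith
  set q := √(1 - ε ^ 2 * sin θ ^ 2) with hq
  have hq_pos : 0 < 1 + q := by positivity
  have hcos_sq : cos θ ^ 2 = 1 - sin θ ^ 2 := by linarith [sin_sq_add_cos_sq θ]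
  rw [finslerLaplacian, hφφ, hθ, hθθ, rpow_three_halves_eq_mul_sqrt hS, ← hq]
  field_simp
  linear_combination c * cos φ * (ε ^ 2 * sin θ ^ 2 + q) * hcos_sq

theorem neg_one_add_sqrt_div_two_mul_add_one {ε : ℝ} (hε : 8 * ε ^ 2 ≤ 9) :
    (-1 + √(9 - 8 * ε ^ 2)) / 2 * ((-1 + √(9 - 8 * ε ^ 2)) / 2 + 1) = 2 * (1 - ε ^ 2) := by
  linear_combination sq_sqrt (by linarith : (0 : ℝ) ≤ 9 - 8 * ε ^ 2) / 4

/-- With `n₁ = (-1 + √(9-8ε²))/2`, the function `W(r,θ,φ) = r^{n₁}·sin θ·cos φ` satisfies the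
Finslerian Laplace equation `(1/r²)·∂_r(r²·∂_r W) + (1/r²)·Δ_FS W = 0` for `r > 0`,
`0 < θ < π`. -/
theorem finslerLaplaceEq_dipole_m1 (ε : ℝ) (hε0 : 0 ≤ ε) (hε1 : ε < 1)
    (r θ φ : ℝ) (hr : 0 < r) (hθ0 : 0 < θ) (hθπ : θ < Real.pi) :
    (1 / r ^ 2) *
        deriv (fun s : ℝ => s ^ 2 *
          deriv (fun s' : ℝ =>
            s' ^ ((-1 + Real.sqrt (9 - 8 * ε ^ 2)) / 2) * Real.sin θ * Real.cos φ) s) r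
      + (1 / r ^ 2) *
        finslerLaplacian ε
          (fun θ' φ' =>
            r ^ ((-1 + Real.sqrt (9 - 8 * ε ^ 2)) / 2) * Real.sin θ' * Real.cos φ') θ φ = 0 := by
  set n := (-1 + √(9 - 8 * ε ^ 2)) / 2
  have hε_sq : ε ^ 2 < 1 := by nlinarith
  have hsin : 0 < sin θ := sin_pos_of_pos_of_lt_pi hθ0 hθπ
  have hW : (fun s' : ℝ => s' ^ n * sin θ * cos φ) = fun s' => s' ^ n * (sin θ * cos φ) := by
    funext s'; ring
  rw [hW, deriv_sq_mul_deriv_rpow_mul_const n _ hr,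
    finslerLaplacian_const_mul_sin_mul_cos ε _ θ φ hsin.ne'
      (by nlinarith [sin_sq_le_one θ, sq_nonneg ε]),
    neg_one_add_sqrt_div_two_mul_add_one (by linarith)]
  ring
end

section
/- For every ε with 0 ≤ ε < 1 and all A, B ∈ ℝ, the function W(r,θ,φ) = (A·r + B·r^{-2})·cos θ satisfies the Finslerian Laplace equation (1/r²)·∂/∂r(r²·∂W/∂r) + (1/r²)·Δ_FS W = 0 at every point with r > 0, 0 < θ < π, φ ∈ ℝ, where Δ_FS acts on the angular variables (θ,φ); that is, the dipolar term of the multipole expansion of the gravitational potential is the same as in the Riemannian case, for every value of the Finslerian parameter ε. -/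
open Real

/-!
Separation of variables, exactly as for the round sphere. On `cos θ` the second-order and
first-order coefficients of `Δ_FS` combine to
`-2 cos θ · ((1 - ε² sin² θ) + ε² sin² θ + √(1 - ε² sin² θ)) / (1 + √(1 - ε² sin² θ)) = -2 cos θ`,
so `cos θ` is still an eigenfunction with eigenvalue `-2`. The radial operator
`∂_r (r² ∂_r ·)` sends `r ^ p` to `p (p + 1) r ^ p`, which is `2 r ^ p` for both `p = 1` and `p = -2`.
-/

lemma finslerLaplacian_const_mul_cos (ε c : ℝ) {θ : ℝ} (hθ : sin θ ≠ 0) (φ : ℝ) :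
    finslerLaplacian ε (fun θ' _ => c * cos θ') θ φ = -2 * (c * cos θ) := by
  have h1s : 1 + √(1 - ε ^ 2 * sin θ ^ 2) ≠ 0 := by positivity
  simp only [finslerLaplacian, deriv_const', deriv_const_mul_field', deriv_cos', deriv.fun_neg',
    Real.deriv_sin, mul_zero, zero_add]
  field_simp
  ring

lemma hasDerivAt_linear_add_inv_sq (A B : ℝ) {x : ℝ} (hx : x ≠ 0) :
    HasDerivAt (fun t => A * t + B * (t ^ 2)⁻¹) (A - 2 * B / x ^ 3) x := by
  have h := ((hasDerivAt_id' x).const_mul A).add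
    (((hasDerivAt_pow 2 x).inv (pow_ne_zero 2 hx)).const_mul B)
  exact h.congr_deriv (by field_simp; ring)

lemma deriv_sq_mul_deriv_linear_add_inv_sq (A B c : ℝ) {r : ℝ} (hr : r ≠ 0) :
    deriv (fun s => s ^ 2 * deriv (fun t => (A * t + B * (t ^ 2)⁻¹) * c) s) r
      = 2 * ((A * r + B * (r ^ 2)⁻¹) * c) := by
  have hnear : (fun s => s ^ 2 * deriv (fun t => (A * t + B * (t ^ 2)⁻¹) * c) s)
      =ᶠ[nhds r] fun s => (A * s ^ 2 - 2 * B * s⁻¹) * c := by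
    filter_upwards [eventually_ne_nhds hr] with s hs
    rw [((hasDerivAt_linear_add_inv_sq A B hs).mul_const c).deriv]
    field_simp
  have hderiv := (((hasDerivAt_pow 2 r).const_mul A).fun_sub
    ((hasDerivAt_inv hr).const_mul (2 * B))).mul_const c
  rw [hnear.deriv_eq, hderiv.deriv]
  field_simp
  ring

theorem finslerLaplaceEq_dipole_general (ε : ℝ) (A B : ℝ)
    (r θ φ : ℝ) (hr : 0 < r) (hθ0 : 0 < θ) (hθπ : θ < Real.pi) :
    (1 / r ^ 2) *
        deriv (fun s : ℝ => s ^ 2 *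
          deriv (fun s' : ℝ => (A * s' + B * s' ^ (-2 : ℝ)) * Real.cos θ) s) r
      + (1 / r ^ 2) *
        finslerLaplacian ε
          (fun θ' _ => (A * r + B * r ^ (-2 : ℝ)) * Real.cos θ') θ φ = 0 := by
  have hsin : sin θ ≠ 0 := (sin_pos_of_pos_of_lt_pi hθ0 hθπ).ne'
  simp only [Real.rpow_neg_ofNat, zpow_neg, zpow_ofNat]
  rw [deriv_sq_mul_deriv_linear_add_inv_sq A B _ hr.ne', finslerLaplacian_const_mul_cos ε _ hsin]
  ring

/-- The function `W(r,θ,φ) = (A·r + B·r⁻²)·cos θ` satisfies the Finslerian Laplace equation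
`(1/r²)·∂_r(r²·∂_r W) + (1/r²)·Δ_FS W = 0` for `r > 0`, `0 < θ < π`, for every `0 ≤ ε < 1`:
the dipolar term of the multipole expansion is the same as in the Riemannian case. -/
theorem finslerLaplaceEq_dipole (ε : ℝ) (hε0 : 0 ≤ ε) (hε1 : ε < 1) (A B : ℝ)
    (r θ φ : ℝ) (hr : 0 < r) (hθ0 : 0 < θ) (hθπ : θ < Real.pi) :
    (1 / r ^ 2) *
        deriv (fun s : ℝ => s ^ 2 *
          deriv (fun s' : ℝ => (A * s' + B * s' ^ (-2 : ℝ)) * Real.cos θ) s) r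
      + (1 / r ^ 2) *
        finslerLaplacian ε
          (fun θ' _ => (A * r + B * r ^ (-2 : ℝ)) * Real.cos θ') θ φ = 0 :=
  finslerLaplaceEq_dipole_general ε A B r θ φ hr hθ0 hθπ
end
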